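/- Let 0 < p ≤ 1. Let G = (V,E) be a finite simple graph with |V| = n, let S ⊆ V be an independent set with |S| = k, let H be a real inner product space, and let x* : V → H be an optimal feasible C-SDP solution for G. Let E'' be a set of pairs (u,v) with u ∈ S, v ∈ V∖S such that {u,v} ∈ E for every (u,v) ∈ E''. Suppose B₁, B₂ ≥ 0 satisfy | 2·p·k(n−k) − 2·|E''| | ≤ B₁ and | ∑_{(u,v) ∈ E''} ‖x*_u − x*_v‖² − p·∑_{(u,v) ∈ S × (V∖S)} ‖x*_u − x*_v‖² | ≤ B₂. Then ∑_{(u,v) ∈ S × S} ‖x*_u − x*_v‖² ≤ 2·(B₁ + B₂)/p. -/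

import Mathlib

/-!
Sending every vertex of the independent set `S` to one new unit vector orthogonal to `H`
gives a feasible solution whose objective has no `S × S` part, a constant `2` on each cross
pair, and the same `Sᶜ × Sᶜ` part. Optimality of `x` therefore bounds
`∑_{S×S} + 2 ∑_{S×Sᶜ}` by `4 k (n - k)`. Since every edge of `E''` contributes exactly `2`,
the hypotheses force `p ∑_{S×Sᶜ} ≥ 2 p k (n - k) - (B₁ + B₂)`, and the two bounds combine.
-/

open Finset

/-- A feasible solution to the crude SDP: unit vectors, pairwise nonnegative inner
products, and orthogonal vectors on edges. -/
def Feasible {V : Type*} {H : Type*} [NormedAddCommGroup H] [InnerProductSpace ℝ H]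
    (G : SimpleGraph V) (x : V → H) : Prop :=
  (∀ v, ‖x v‖ = 1) ∧ (∀ u v : V, (0 : ℝ) ≤ inner ℝ (x u) (x v)) ∧
    (∀ u v : V, G.Adj u v → (inner ℝ (x u) (x v) : ℝ) = 0)

/-- The crude SDP objective: the sum of squared distances over all ordered pairs. -/
noncomputable def obj {V : Type*} [Fintype V] {H : Type*} [NormedAddCommGroup H]
    [InnerProductSpace ℝ H] (x : V → H) : ℝ :=
  ∑ u : V, ∑ v : V, ‖x u - x v‖ ^ 2

section

variable {V H : Type*} [NormedAddCommGroup H]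

noncomputable def sqDistSum (x : V → H) (s t : Finset V) : ℝ :=
  ∑ u ∈ s, ∑ v ∈ t, ‖x u - x v‖ ^ 2

lemma sqDistSum_comm (x : V → H) (s t : Finset V) : sqDistSum x s t = sqDistSum x t s := by
  rw [sqDistSum, sqDistSum, sum_comm]
  simp only [norm_sub_rev]

variable [InnerProductSpace ℝ H]

lemma norm_sub_sq_eq_two_sub_two_inner {a b : H} (ha : ‖a‖ = 1) (hb : ‖b‖ = 1) :
    ‖a - b‖ ^ 2 = 2 - 2 * inner ℝ a b := by
  rw [norm_sub_sq_real, ha, hb]; ring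

lemma Feasible.norm_sub_sq_of_adj {G : SimpleGraph V} {x : V → H} (hx : Feasible G x)
    {u v : V} (h : G.Adj u v) : ‖x u - x v‖ ^ 2 = 2 := by
  rw [norm_sub_sq_eq_two_sub_two_inner (hx.1 u) (hx.1 v), hx.2.2 u v h]; ring

lemma Feasible.sum_norm_sub_sq_of_adj {G : SimpleGraph V} {x : V → H} (hx : Feasible G x)
    {E : Finset (V × V)} (hE : ∀ q ∈ E, G.Adj q.1 q.2) :
    ∑ q ∈ E, ‖x q.1 - x q.2‖ ^ 2 = 2 * #E := by
  rw [sum_congr rfl fun q hq => hx.norm_sub_sq_of_adj (hE q hq), sum_const, nsmul_eq_mul,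
    mul_comm]

lemma obj_eq_sqDistSum [Fintype V] [DecidableEq V] (x : V → H) (S : Finset V) :
    obj x = sqDistSum x S S + 2 * sqDistSum x S Sᶜ + sqDistSum x Sᶜ Sᶜ := by
  have hsplit : ∀ u, ∑ v, ‖x u - x v‖ ^ 2 =
      ∑ v ∈ S, ‖x u - x v‖ ^ 2 + ∑ v ∈ Sᶜ, ‖x u - x v‖ ^ 2 :=
    fun u => (sum_add_sum_compl S _).symm
  rw [obj, ← sum_add_sum_compl S, sum_congr rfl fun u _ => hsplit u,
    sum_congr rfl fun u _ => hsplit u, sum_add_distrib, sum_add_distrib]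
  change sqDistSum x S S + sqDistSum x S Sᶜ + (sqDistSum x Sᶜ S + sqDistSum x Sᶜ Sᶜ) = _
  rw [sqDistSum_comm x Sᶜ S]
  ring

section Collapse

variable [DecidableEq V]

def collapse (S : Finset V) (x : V → H) : V → WithLp 2 (H × ℝ) :=
  fun v => if v ∈ S then WithLp.toLp 2 (0, 1) else WithLp.toLp 2 (x v, 0)

variable {S : Finset V} {x : V → H}

lemma inner_collapse (u v : V) :
    inner ℝ (collapse S x u) (collapse S x v) =
      if u ∈ S then (if v ∈ S then 1 else 0)
      else (if v ∈ S then 0 else inner ℝ (x u) (x v)) := by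
  unfold collapse
  split_ifs <;> simp

lemma norm_collapse (hx : ∀ v, ‖x v‖ = 1) (v : V) : ‖collapse S x v‖ = 1 := by
  have hsq : ‖collapse S x v‖ ^ 2 = 1 := by
    rw [← real_inner_self_eq_norm_sq, inner_collapse, real_inner_self_eq_norm_sq, hx]
    split_ifs <;> norm_num
  exact (pow_eq_one_iff_of_nonneg (norm_nonneg _) two_ne_zero).mp hsq

lemma Feasible.collapse {G : SimpleGraph V} (hx : Feasible G x)
    (hS : ∀ u ∈ S, ∀ v ∈ S, ¬ G.Adj u v) : Feasible G (collapse S x) := by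
  refine ⟨norm_collapse hx.1, fun u v => ?_, fun u v h => ?_⟩ <;> rw [inner_collapse]
  · split_ifs
    exacts [zero_le_one, le_rfl, le_rfl, hx.2.1 u v]
  · split_ifs with hu hv hv
    exacts [absurd h (hS u hu v hv), rfl, rfl, hx.2.2 u v h]

lemma norm_collapse_sub_sq (hx : ∀ v, ‖x v‖ = 1) (u v : V) :
    ‖collapse S x u - collapse S x v‖ ^ 2 =
      if u ∈ S then (if v ∈ S then 0 else 2)
      else (if v ∈ S then 2 else ‖x u - x v‖ ^ 2) := by
  rw [norm_sub_sq_eq_two_sub_two_inner (norm_collapse hx u) (norm_collapse hx v),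
    inner_collapse, norm_sub_sq_eq_two_sub_two_inner (hx u) (hx v)]
  split_ifs <;> ring

lemma obj_collapse [Fintype V] (hx : ∀ v, ‖x v‖ = 1) :
    obj (collapse S x) = 4 * #S * #Sᶜ + sqDistSum x Sᶜ Sᶜ := by
  have hSS : sqDistSum (collapse S x) S S = 0 :=
    sum_eq_zero fun u hu => sum_eq_zero fun v hv => by
      rw [norm_collapse_sub_sq hx, if_pos hu, if_pos hv]
  have hSSc : sqDistSum (collapse S x) S Sᶜ = 2 * #S * #Sᶜ := by
    rw [sqDistSum, sum_congr rfl fun u hu => sum_congr rfl fun v hv => by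
      rw [norm_collapse_sub_sq hx, if_pos hu, if_neg (mem_compl.mp hv)]]
    simp only [sum_const, nsmul_eq_mul]
    ring
  have hScSc : sqDistSum (collapse S x) Sᶜ Sᶜ = sqDistSum x Sᶜ Sᶜ :=
    sum_congr rfl fun u hu => sum_congr rfl fun v hv => by
      rw [norm_collapse_sub_sq hx, if_neg (mem_compl.mp hu), if_neg (mem_compl.mp hv)]
  rw [obj_eq_sqDistSum _ S, hSS, hSSc, hScSc]
  ring

lemma sqDistSum_add_two_mul_le_of_optimal [Fintype V] {G : SimpleGraph V}
    (hx : Feasible G x) (hopt : ∀ y : V → WithLp 2 (H × ℝ), Feasible G y → obj x ≤ obj y)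
    (hS : ∀ u ∈ S, ∀ v ∈ S, ¬ G.Adj u v) :
    sqDistSum x S S + 2 * sqDistSum x S Sᶜ ≤ 4 * #S * #Sᶜ := by
  have h := hopt _ (hx.collapse hS)
  rw [obj_eq_sqDistSum x S, obj_collapse hx.1] at h
  linarith

end Collapse

end

theorem stmt6_general (p : ℝ) (hp0 : 0 < p)
    {V : Type*} [Fintype V] [DecidableEq V] (G : SimpleGraph V)
    {H : Type*} [NormedAddCommGroup H] [InnerProductSpace ℝ H]
    (n k : ℕ) (hn : Fintype.card V = n) (S : Finset V) (hk : S.card = k)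
    (hind : ∀ u ∈ S, ∀ v ∈ S, ¬ G.Adj u v)
    (x : V → H) (hfeas : Feasible G x)
    (hopt : ∀ y : V → WithLp 2 (H × ℝ), Feasible G y → obj x ≤ obj y)
    (E'' : Finset (V × V))
    (hE2 : ∀ p ∈ E'', G.Adj p.1 p.2)
    (B₁ B₂ : ℝ)
    (h₁ : |2 * p * ((k : ℝ) * ((n : ℝ) - k)) - 2 * (E''.card : ℝ)| ≤ B₁)
    (h₂ : |(∑ q ∈ E'', ‖x q.1 - x q.2‖ ^ 2) -
        p * ∑ u ∈ S, ∑ v ∈ Sᶜ, ‖x u - x v‖ ^ 2| ≤ B₂) :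
    ∑ u ∈ S, ∑ v ∈ S, ‖x u - x v‖ ^ 2 ≤ 2 * (B₁ + B₂) / p := by
  have hcollapse := sqDistSum_add_two_mul_le_of_optimal hfeas hopt hind
  have hcard : (#Sᶜ : ℝ) = n - k := by
    rw [card_compl, Nat.cast_sub (card_le_univ S), hn, hk]
  rw [hk, hcard] at hcollapse
  rw [hfeas.sum_norm_sub_sq_of_adj hE2] at h₂
  have hedges : 2 * p * (k * (n - k)) - 2 * #E'' ≤ B₁ := (abs_le.mp h₁).2
  have hcross : 2 * #E'' - p * sqDistSum x S Sᶜ ≤ B₂ := (abs_le.mp h₂).2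
  rw [le_div_iff₀ hp0]
  change sqDistSum x S S * p ≤ _
  linarith [mul_le_mul_of_nonneg_left hcollapse hp0.le]

theorem stmt6 (p : ℝ) (hp0 : 0 < p) (hp1 : p ≤ 1)
    {V : Type*} [Fintype V] [DecidableEq V] (G : SimpleGraph V)
    {H : Type*} [NormedAddCommGroup H] [InnerProductSpace ℝ H]
    (n k : ℕ) (hn : Fintype.card V = n) (S : Finset V) (hk : S.card = k)
    (hind : ∀ u ∈ S, ∀ v ∈ S, ¬ G.Adj u v)
    (x : V → H) (hfeas : Feasible G x)
    (hopt : ∀ y : V → WithLp 2 (H × ℝ), Feasible G y → obj x ≤ obj y)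
    (E'' : Finset (V × V))
    (hE1 : ∀ p ∈ E'', p.1 ∈ S ∧ p.2 ∉ S)
    (hE2 : ∀ p ∈ E'', G.Adj p.1 p.2)
    (B₁ B₂ : ℝ) (hB₁ : 0 ≤ B₁) (hB₂ : 0 ≤ B₂)
    (h₁ : |2 * p * ((k : ℝ) * ((n : ℝ) - k)) - 2 * (E''.card : ℝ)| ≤ B₁)
    (h₂ : |(∑ q ∈ E'', ‖x q.1 - x q.2‖ ^ 2) -
        p * ∑ u ∈ S, ∑ v ∈ Sᶜ, ‖x u - x v‖ ^ 2| ≤ B₂) :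
    ∑ u ∈ S, ∑ v ∈ S, ‖x u - x v‖ ^ 2 ≤ 2 * (B₁ + B₂) / p :=
  stmt6_general p hp0 G n k hn S hk hind x hfeas hopt E'' hE2 B₁ B₂ h₁ h₂
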